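/- Let H=(V,E,W) be a connected finite hypergraph, p>1, L⊆V nonempty with labels y:L→ℝ. Then the simplified hypergraph p-Laplacian equation admits a unique solution: there exists exactly one u:V→ℝ with L^p_H u(x_i)=0 for all x_i∈V∖L and u(x_i)=y_i for all x_i∈L; moreover this solution satisfies min_{x_j∈L}y_j ≤ u(x_i) ≤ max_{x_j∈L}y_j for every x_i∈V. -/

import Mathlib

/-!
Existence is a Knaster–Tarski argument. On the complete lattice of functions `V → [min y, max y]`,
replace `u x` at each unlabeled `x` by the largest `t ∈ [min y, max y]` with
`L^p_H (u[x ↦ t]) x ≥ 0`. Since `L^p_H u x` is nondecreasing in the values `u z`, `z ≠ x`,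
this map is monotone, and by continuity and the intermediate value theorem its fixed points
solve the equation.

Uniqueness and the bounds follow from a comparison principle: a subsolution `u` and a
supersolution `v` with `u ≤ v` on `L` satisfy `u ≤ v`. Otherwise `v + c`, with
`c = max (u - v) > 0`, touches `u` from above. At a contact point where `u` is largest, strict
monotonicity of `φ_p` forces `u` and `v + c` to be constant on every hyperedge through it, so
by connectedness the contact set reaches `L`, which is impossible. Constants are solutions,
so comparing with the constants `min y` and `max y` gives the bounds.
-/

open Finset

/-- A finite hypergraph on vertex set `V` with `m` hyperedges:
each hyperedge is a nonempty finite set of vertices and carries a positive weight. -/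
structure FinHypergraph (V : Type*) [Fintype V] (m : ℕ) where
  e : Fin m → Finset V
  w : Fin m → ℝ
  e_nonempty : ∀ k, (e k).Nonempty
  w_pos : ∀ k, 0 < w k

variable {V : Type*} [Fintype V] {m : ℕ}

/-- Maximal oscillation of `u` on the hyperedge `e k`:
`max_{x_i, x_j ∈ e_k} |u x_i - u x_j|`. -/
noncomputable def osc (H : FinHypergraph V m) (u : V → ℝ) (k : Fin m) : ℝ :=
  (H.e k ×ˢ H.e k).sup' ((H.e_nonempty k).product (H.e_nonempty k))
    (fun q => |u q.1 - u q.2|)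

/-- The hypergraph p-Laplacian regularizer
`F_H(u) = ∑ k w_k (max_{x_i,x_j ∈ e_k} |u x_i - u x_j|)^p`. -/
noncomputable def FH (H : FinHypergraph V m) (p : ℝ) (u : V → ℝ) : ℝ :=
  ∑ k : Fin m, H.w k * (osc H u k) ^ p

/-- `u` is admissible for the labeled set `L` with labels `y`. -/
def Admissible (L : Finset V) (y u : V → ℝ) : Prop := ∀ x ∈ L, u x = y x

/-- `u` is a minimizer of the constrained functional `F_H^{con}`. -/
def IsMinimizer (H : FinHypergraph V m) (p : ℝ) (L : Finset V) (y u : V → ℝ) : Prop :=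
  Admissible L y u ∧ ∀ v : V → ℝ, Admissible L y v → FH H p u ≤ FH H p v

/-- Connectivity of a hypergraph: any two vertices are linked by a chain of hyperedges
with consecutive nonempty intersections. -/
def FinHypergraph.Connected [DecidableEq V] (H : FinHypergraph V m) : Prop :=
  ∀ x y : V, ∃ l : ℕ, ∃ ks : Fin (l + 1) → Fin m,
    x ∈ H.e (ks 0) ∧ y ∈ H.e (ks (Fin.last l)) ∧
    ∀ i : Fin l, (H.e (ks i.castSucc) ∩ H.e (ks i.succ)).Nonempty

/-- The set `D(u)` of vertices whose values are rigid: labeled vertices together with the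
unlabeled vertices at which every sufficiently small perturbation strictly increases `F_H`. -/
def Dset [DecidableEq V] (H : FinHypergraph V m) (p : ℝ) (L : Finset V) (u : V → ℝ) : Set V :=
  {x | x ∈ L ∨ (x ∉ L ∧ ∃ δ > (0 : ℝ), ∀ ε : ℝ, 0 < |ε| → |ε| < δ →
    FH H p u < FH H p (Function.update u x (u x + ε)))}

/-- φ_p(s) = |s|^{p-2} s for s ≠ 0 and φ_p(0) = 0. -/
noncomputable def phiP (p s : ℝ) : ℝ := if s = 0 then 0 else |s| ^ (p - 2) * s

/-- The simplified hypergraph p-Laplacian operator. -/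
noncomputable def LpH [DecidableEq V] (H : FinHypergraph V m) (p : ℝ) (u : V → ℝ) (x : V) : ℝ :=
  ∑ k ∈ Finset.univ.filter (fun k => x ∈ H.e k),
    H.w k * phiP p ((H.e k).sup' (H.e_nonempty k) u + (H.e k).inf' (H.e_nonempty k) u - 2 * u x)

/-- The indicator vector `𝟙_x ∈ ℝ^V`. -/
def ind [DecidableEq V] (x : V) : V → ℝ := fun z => if z = x then 1 else 0

/-- Euclidean inner product on `ℝ^V`. -/
noncomputable def ip (b u : V → ℝ) : ℝ := ∑ x : V, b x * u x

/-- `B_e = conv {𝟙_{x_i} - 𝟙_{x_j} : x_i, x_j ∈ e}`. -/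
def Bset [DecidableEq V] (e : Finset V) : Set (V → ℝ) :=
  convexHull ℝ {b | ∃ xi ∈ e, ∃ xj ∈ e, b = ind xi - ind xj}

lemma phiP_zero (p : ℝ) : phiP p 0 = 0 := if_pos rfl

lemma phiP_of_pos (p : ℝ) {s : ℝ} (hs : 0 < s) : phiP p s = s ^ (p - 1) := by
  rw [phiP, if_neg hs.ne', abs_of_pos hs, show p - 1 = p - 2 + 1 by ring,
    Real.rpow_add_one hs.ne']

lemma phiP_neg (p s : ℝ) : phiP p (-s) = -phiP p s := by
  unfold phiP
  split_ifs <;> simp_all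

lemma phiP_strictMono {p : ℝ} (hp : 1 < p) : StrictMono (phiP p) := by
  refine strictMono_of_odd_strictMonoOn_nonneg (phiP_neg p) ?_
  have hpow := Real.strictMonoOn_rpow_Ici_of_exponent_pos (sub_pos.2 hp)
  intro s hs t ht hst
  rcases (Set.mem_Ici.1 hs).eq_or_lt with rfl | hs
  · rw [phiP_of_pos p hst, phiP_zero]
    exact Real.rpow_pos_of_pos hst (p - 1)
  · rw [phiP_of_pos p hs, phiP_of_pos p (hs.trans hst)]
    exact hpow hs.le ht hst

lemma phiP_surjective {p : ℝ} (hp : 1 < p) : Function.Surjective (phiP p) := by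
  have hpos : ∀ t, 0 < t → ∃ s, phiP p s = t := fun t ht =>
    ⟨t ^ (p - 1)⁻¹, by
      rw [phiP_of_pos p (by positivity), Real.rpow_inv_rpow ht.le (sub_pos.2 hp).ne']⟩
  intro t
  rcases lt_trichotomy t 0 with ht | rfl | ht
  · obtain ⟨s, hs⟩ := hpos (-t) (neg_pos.2 ht)
    exact ⟨-s, by rw [phiP_neg, hs, neg_neg]⟩
  · exact ⟨0, phiP_zero p⟩
  · exact hpos t ht

lemma phiP_continuous {p : ℝ} (hp : 1 < p) : Continuous (phiP p) :=
  (phiP_strictMono hp).monotone.continuous_of_surjective (phiP_surjective hp)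

section LpH

variable {H : FinHypergraph V m} {p : ℝ}

noncomputable def LpHTerm (H : FinHypergraph V m) (p : ℝ) (u : V → ℝ) (x : V) (k : Fin m) : ℝ :=
  H.w k * phiP p ((H.e k).sup' (H.e_nonempty k) u + (H.e k).inf' (H.e_nonempty k) u - 2 * u x)

lemma LpH_eq_sum_LpHTerm [DecidableEq V] (u : V → ℝ) (x : V) :
    LpH H p u x = ∑ k ∈ univ.filter (fun k => x ∈ H.e k), LpHTerm H p u x k := rfl

lemma LpHTerm_mono (hp : 1 < p) {u v : V → ℝ} (huv : u ≤ v) {x : V} (hx : u x = v x)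
    (k : Fin m) : LpHTerm H p u x k ≤ LpHTerm H p v x k := by
  have hsup := Finset.sup'_mono_fun (hs := H.e_nonempty k) fun z _ => huv z
  have hinf := Finset.inf'_mono_fun (hs := H.e_nonempty k) fun z _ => huv z
  exact mul_le_mul_of_nonneg_left ((phiP_strictMono hp).monotone (by linarith)) (H.w_pos k).le

lemma LpH_mono [DecidableEq V] (hp : 1 < p) {u v : V → ℝ} (huv : u ≤ v) {x : V}
    (hx : u x = v x) : LpH H p u x ≤ LpH H p v x :=
  Finset.sum_le_sum fun k _ => LpHTerm_mono hp huv hx k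

lemma LpH_add_const [DecidableEq V] (u : V → ℝ) (c : ℝ) (x : V) :
    LpH H p (fun z => u z + c) x = LpH H p u x := by
  refine Finset.sum_congr rfl fun k _ => ?_
  have hinf : (H.e k).inf' (H.e_nonempty k) (fun z => u z + c)
      = (H.e k).inf' (H.e_nonempty k) u + c :=
    (map_finset_inf' (OrderIso.addRight c) (H.e_nonempty k) u).symm
  rw [← Finset.sup'_add, hinf]
  ring_nf

lemma LpH_const [DecidableEq V] (c : ℝ) (x : V) : LpH H p (fun _ => c) x = 0 := by
  simp [LpH, show c + c - 2 * c = 0 by ring, phiP_zero]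

lemma LpH_nonneg_of_minimum [DecidableEq V] (hp : 1 < p) {u : V → ℝ} {x : V}
    (hx : ∀ z ≠ x, u x ≤ u z) : 0 ≤ LpH H p u x := by
  refine Finset.sum_nonneg fun k hk => mul_nonneg (H.w_pos k).le
    ((phiP_zero p).symm.trans_le ((phiP_strictMono hp).monotone ?_))
  have := Finset.le_sup' u (Finset.mem_filter.1 hk).2
  have := Finset.le_inf' (H.e_nonempty k) u fun z _ =>
    (eq_or_ne z x).elim (fun h => h ▸ le_rfl) (hx z)
  linarith

lemma LpH_nonpos_of_maximum [DecidableEq V] (hp : 1 < p) {u : V → ℝ} {x : V}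
    (hx : ∀ z ≠ x, u z ≤ u x) : LpH H p u x ≤ 0 := by
  refine Finset.sum_nonpos fun k hk => mul_nonpos_of_nonneg_of_nonpos (H.w_pos k).le
    ((phiP_strictMono hp).monotone ?_ |>.trans_eq (phiP_zero p))
  have := Finset.inf'_le u (Finset.mem_filter.1 hk).2
  have := Finset.sup'_le (H.e_nonempty k) u fun z _ =>
    (eq_or_ne z x).elim (fun h => h ▸ le_rfl) (hx z)
  linarith

lemma continuous_LpH_update [DecidableEq V] (hp : 1 < p) (u : V → ℝ) (x : V) :
    Continuous fun t => LpH H p (Function.update u x t) x := by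
  have := phiP_continuous hp
  unfold LpH
  fun_prop

end LpH

lemma sSup_setOf_nonneg_mem_Icc_and_eq_zero {g : ℝ → ℝ} (hg : Continuous g) {a b : ℝ}
    (hab : a ≤ b) (ha : 0 ≤ g a) (hb : g b ≤ 0) :
    sSup {t ∈ Set.Icc a b | 0 ≤ g t} ∈ Set.Icc a b ∧ g (sSup {t ∈ Set.Icc a b | 0 ≤ g t}) = 0 := by
  set S := {t ∈ Set.Icc a b | 0 ≤ g t}
  have hbdd : BddAbove S := ⟨b, fun t ht => ht.1.2⟩
  have hS : sSup S ∈ S := (isClosed_Icc.inter (isClosed_le continuous_const hg)).csSup_mem (s := S)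
    ⟨a, Set.left_mem_Icc.2 hab, ha⟩ hbdd
  -- a zero of `g` to the right of `sSup S` lies in `S`, so it is `sSup S` itself
  obtain ⟨t, ht, hgt⟩ := intermediate_value_Icc' hS.1.2 hg.continuousOn ⟨hb, hS.2⟩
  have hts : t ≤ sSup S := le_csSup hbdd ⟨⟨hS.1.1.trans ht.1, ht.2⟩, hgt.ge⟩
  exact ⟨hS.1, le_antisymm hts ht.1 ▸ hgt⟩

section LocalSolve

variable [DecidableEq V] {H : FinHypergraph V m} {p a b : ℝ}

noncomputable def localSolve (H : FinHypergraph V m) (p a b : ℝ) (u : V → ℝ) (x : V) : ℝ :=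
  sSup {t ∈ Set.Icc a b | 0 ≤ LpH H p (Function.update u x t) x}

lemma localSolve_mem_Icc_and_LpH_eq_zero (hp : 1 < p) (hab : a ≤ b) {u : V → ℝ}
    (hu : ∀ z, u z ∈ Set.Icc a b) (x : V) :
    localSolve H p a b u x ∈ Set.Icc a b ∧
      LpH H p (Function.update u x (localSolve H p a b u x)) x = 0 :=
  sSup_setOf_nonneg_mem_Icc_and_eq_zero (continuous_LpH_update hp u x) hab
    (LpH_nonneg_of_minimum hp fun z hz => by
      simpa [Function.update_of_ne hz] using (hu z).1)
    (LpH_nonpos_of_maximum hp fun z hz => by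
      simpa [Function.update_of_ne hz] using (hu z).2)

lemma localSolve_mono (hp : 1 < p) (hab : a ≤ b) {u v : V → ℝ} (hu : ∀ z, a ≤ u z) (huv : u ≤ v)
    (x : V) : localSolve H p a b u x ≤ localSolve H p a b v x := by
  refine csSup_le_csSup ⟨b, fun t ht => ht.1.2⟩ ⟨a, Set.left_mem_Icc.2 hab, ?_⟩ ?_
  · exact LpH_nonneg_of_minimum hp fun z hz => by simpa [Function.update_of_ne hz] using hu z
  · refine fun t ⟨ht, hut⟩ => ⟨ht, hut.trans (LpH_mono hp (fun z => ?_) (by simp))⟩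
    rcases eq_or_ne z x with rfl | hzx
    · simp
    · simpa [Function.update_of_ne hzx] using huv z

end LocalSolve

theorem exists_LpH_eq_zero [DecidableEq V] {H : FinHypergraph V m} {p : ℝ} (hp : 1 < p)
    {L : Finset V} (hL : L.Nonempty) (y : V → ℝ) :
    ∃ u : V → ℝ, (∀ x ∉ L, LpH H p u x = 0) ∧ ∀ x ∈ L, u x = y x := by
  set a := L.inf' hL y
  set b := L.sup' hL y
  have hy : ∀ x ∈ L, y x ∈ Set.Icc a b := fun x hx => ⟨Finset.inf'_le y hx, Finset.le_sup' y hx⟩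
  have hab : a ≤ b := (hy _ hL.choose_spec).1.trans (hy _ hL.choose_spec).2
  have : Fact (a ≤ b) := ⟨hab⟩
  let T : (V → Set.Icc a b) →o (V → Set.Icc a b) :=
    { toFun := fun u x => if hx : x ∈ L then ⟨y x, hy x hx⟩ else
        ⟨localSolve H p a b (fun z => u z) x,
          (localSolve_mem_Icc_and_LpH_eq_zero hp hab (fun z => (u z).2) x).1⟩
      monotone' := fun u v huv x => by
        by_cases hx : x ∈ L
        · simp only [dif_pos hx, le_refl]
        · simp only [dif_neg hx, ← Subtype.coe_le_coe]
          exact localSolve_mono hp hab (fun z => (u z).2.1) huv x }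
  obtain ⟨u, hu⟩ : ∃ u, T u = u := ⟨_, T.map_lfp⟩
  have hu_L (x : V) (hx : x ∈ L) : (u x : ℝ) = y x := by
    rw [← hu]
    exact congrArg Subtype.val (dif_pos hx)
  have hu_notL (x : V) (hx : x ∉ L) : (u x : ℝ) = localSolve H p a b (fun z => u z) x := by
    conv_lhs => rw [← hu]
    exact congrArg Subtype.val (dif_neg hx)
  refine ⟨fun x => u x, fun x hx => ?_, hu_L⟩
  have h := (localSolve_mem_Icc_and_LpH_eq_zero (H := H) hp hab (fun z => (u z).2) x).2
  rwa [← hu_notL x hx, Function.update_eq_self] at h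

section Comparison

variable [DecidableEq V] {H : FinHypergraph V m} {p : ℝ}

lemma FinHypergraph.Connected.forall_of_forall_mem_edge (hconn : H.Connected) {P : V → Prop}
    (hP : ∀ z, P z → ∀ k, z ∈ H.e k → ∀ y ∈ H.e k, P y) {z₀ : V} (hz₀ : P z₀) (y : V) : P y := by
  obtain ⟨l, ks, h0, hlast, hchain⟩ := hconn z₀ y
  suffices ∀ i, ∀ z ∈ H.e (ks i), P z from this _ y hlast
  intro i
  induction i using Fin.induction with
  | zero => exact hP z₀ hz₀ _ h0
  | succ i ih =>
    obtain ⟨z, hz⟩ := hchain i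
    exact hP z (ih z (Finset.mem_inter.1 hz).1) _ (Finset.mem_inter.1 hz).2

lemma sup'_eq_sup'_of_touch (hp : 1 < p) {u w : V → ℝ} (huw : u ≤ w) {z : V} (hz : u z = w z)
    (hle : LpH H p w z ≤ LpH H p u z) {k : Fin m} (hk : z ∈ H.e k) :
    (H.e k).sup' (H.e_nonempty k) u = (H.e k).sup' (H.e_nonempty k) w := by
  rw [LpH_eq_sum_LpHTerm, LpH_eq_sum_LpHTerm] at hle
  have hterm : ∀ j ∈ univ.filter (fun j => z ∈ H.e j), LpHTerm H p u z j ≤ LpHTerm H p w z j :=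
    fun j _ => LpHTerm_mono hp huw hz j
  have heq := (Finset.sum_eq_sum_iff_of_le hterm).1 (le_antisymm (Finset.sum_le_sum hterm) hle) k
    (Finset.mem_filter.2 ⟨Finset.mem_univ k, hk⟩)
  have harg := (phiP_strictMono hp).injective (mul_left_cancel₀ (H.w_pos k).ne' heq)
  have := Finset.sup'_mono_fun (hs := H.e_nonempty k) fun y _ => huw y
  have := Finset.inf'_mono_fun (hs := H.e_nonempty k) fun y _ => huw y
  linarith

lemma eq_on_edge_of_touch (hp : 1 < p) {u w : V → ℝ} (huw : u ≤ w) {z : V} (hz : u z = w z)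
    (hu : 0 ≤ LpH H p u z) (hw : LpH H p w z ≤ 0) (hmax : ∀ y, u y = w y → u y ≤ u z)
    {k : Fin m} (hk : z ∈ H.e k) {y : V} (hy : y ∈ H.e k) : u y = u z ∧ w y = u z := by
  have hsup {j : Fin m} (hj : z ∈ H.e j) :
      (H.e j).sup' (H.e_nonempty j) u = (H.e j).sup' (H.e_nonempty j) w :=
    sup'_eq_sup'_of_touch hp huw hz (hw.trans hu) hj
  -- a maximizer of `u` on a hyperedge through `z` lies in the contact set
  have hsup_u {j : Fin m} (hj : z ∈ H.e j) : (H.e j).sup' (H.e_nonempty j) u = u z := by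
    obtain ⟨y, hy, hye⟩ := Finset.exists_mem_eq_sup' (H.e_nonempty j) u
    have hyw : u y = w y :=
      le_antisymm (huw y) (by rw [← hye, hsup hj]; exact Finset.le_sup' w hy)
    linarith [hmax y hyw, Finset.le_sup' u hj]
  have hnonpos : ∀ j ∈ univ.filter (fun j => z ∈ H.e j), LpHTerm H p u z j ≤ 0 := fun j hj =>
    mul_nonpos_of_nonneg_of_nonpos (H.w_pos j).le (((phiP_strictMono hp).monotone (by
      linarith [hsup_u (Finset.mem_filter.1 hj).2, Finset.inf'_le u (Finset.mem_filter.1 hj).2])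
      ).trans_eq (phiP_zero p))
  have hLpH_u : LpH H p u z = 0 := le_antisymm ((LpH_mono hp huw hz).trans hw) hu
  rw [LpH_eq_sum_LpHTerm] at hLpH_u
  have hterm := (Finset.sum_eq_zero_iff_of_nonpos hnonpos).1 hLpH_u k
    (Finset.mem_filter.2 ⟨Finset.mem_univ k, hk⟩)
  have harg := (phiP_strictMono hp).injective
    (((mul_eq_zero.1 hterm).resolve_left (H.w_pos k).ne').trans (phiP_zero p).symm)
  have := Finset.inf'_le u hy
  have := Finset.le_sup' u hy
  have := Finset.le_sup' w hy
  have := huw y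
  constructor <;> linarith [hsup_u hk, hsup hk]

theorem FinHypergraph.Connected.le_of_LpH (hconn : H.Connected) (hp : 1 < p) {L : Finset V}
    (hL : L.Nonempty) {u v : V → ℝ} (hu : ∀ x ∉ L, 0 ≤ LpH H p u x)
    (hv : ∀ x ∉ L, LpH H p v x ≤ 0) (hLuv : ∀ x ∈ L, u x ≤ v x) : u ≤ v := by
  obtain ⟨ℓ, hℓ⟩ := hL
  have : Nonempty V := ⟨ℓ⟩
  obtain ⟨z₁, -, hz₁⟩ := Finset.exists_max_image univ (fun z => u z - v z) univ_nonempty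
  set c := u z₁ - v z₁
  suffices hc : c ≤ 0 from fun x => by linarith [hz₁ x (Finset.mem_univ x)]
  by_contra! hc
  set w := fun z => v z + c
  have huw : u ≤ w := fun z => by linarith [hz₁ z (Finset.mem_univ z)]
  have hcontact : ∀ z, u z = w z → z ∉ L := fun z hz hzL => by linarith [hLuv z hzL]
  obtain ⟨z₀, hz₀w, hz₀⟩ := Finset.exists_max_image (univ.filter fun z => u z = w z) u
    ⟨z₁, Finset.mem_filter.2 ⟨Finset.mem_univ z₁, by simp [w, c]⟩⟩
  have hprop : ∀ z, u z = w z ∧ u z = u z₀ → ∀ k, z ∈ H.e k → ∀ y ∈ H.e k,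
      u y = w y ∧ u y = u z₀ := by
    rintro z ⟨hzw, hz⟩ k hk y hy
    have hzL := hcontact z hzw
    obtain ⟨hyu, hyw⟩ := eq_on_edge_of_touch hp huw hzw (hu z hzL)
      (by rw [LpH_add_const]; exact hv z hzL)
      (fun y hy => hz ▸ hz₀ y (Finset.mem_filter.2 ⟨Finset.mem_univ y, hy⟩)) hk hy
    exact ⟨hyu.trans hyw.symm, hyu.trans hz⟩
  exact hcontact ℓ (hconn.forall_of_forall_mem_edge hprop
    ⟨(Finset.mem_filter.1 hz₀w).2, rfl⟩ ℓ).1 hℓ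

end Comparison

/-- the simplified hypergraph p-Laplacian equation admits a unique solution,
and this solution takes values between the smallest and the largest label. -/
theorem pLaplacian_equation_wellposed [DecidableEq V] (H : FinHypergraph V m)
    (hconn : H.Connected) (p : ℝ) (hp : 1 < p) (L : Finset V) (hL : L.Nonempty) (y : V → ℝ) :
    (∃! u : V → ℝ, (∀ x : V, x ∉ L → LpH H p u x = 0) ∧ ∀ x ∈ L, u x = y x) ∧
    ∀ u : V → ℝ, ((∀ x : V, x ∉ L → LpH H p u x = 0) ∧ ∀ x ∈ L, u x = y x) →
      ∀ x : V, L.inf' hL y ≤ u x ∧ u x ≤ L.sup' hL y := by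
  have comparison {u v : V → ℝ} (hu : ∀ x ∉ L, 0 ≤ LpH H p u x)
      (hv : ∀ x ∉ L, LpH H p v x ≤ 0) (hLuv : ∀ x ∈ L, u x ≤ v x) : u ≤ v :=
    hconn.le_of_LpH hp hL hu hv hLuv
  obtain ⟨u, hu, hLu⟩ := exists_LpH_eq_zero (H := H) hp hL y
  refine ⟨⟨u, ⟨hu, hLu⟩, fun v ⟨hv, hLv⟩ => le_antisymm ?_ ?_⟩, fun v ⟨hv, hLv⟩ x => ⟨?_, ?_⟩⟩
  · exact comparison (fun x hx => (hv x hx).ge) (fun x hx => (hu x hx).le)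
      fun x hx => (hLv x hx).trans (hLu x hx).symm |>.le
  · exact comparison (fun x hx => (hu x hx).ge) (fun x hx => (hv x hx).le)
      fun x hx => (hLu x hx).trans (hLv x hx).symm |>.le
  · exact comparison (u := fun _ => L.inf' hL y) (fun x _ => (LpH_const _ x).ge)
      (fun x hx => (hv x hx).le) (fun x hx => hLv x hx ▸ Finset.inf'_le y hx) x
  · exact comparison (v := fun _ => L.sup' hL y) (fun x hx => (hv x hx).ge)
      (fun x _ => (LpH_const _ x).le) (fun x hx => hLv x hx ▸ Finset.le_sup' y hx) x
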